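/- arXiv:1108.0057 — 10 statements merged into one kernel-verified Lean document; each statement's English description precedes it below -/
import Mathlib

section
/- Let S be a finite nonempty set and ξ, ζ : S → ℍ. Then |Σ_{x∈S} ξ_x − Σ_{x∈S} ζ_x|² = Σ_{x∈S} Im ζ_x · (Σ_{y∈S} Im ξ_y · cos α_{x,y} · Q_{x,y}) · γ(ξ_x, ζ_x), where cos α_{x,y} and Q_{x,y} are formed from the pair of families g = ξ and h = ζ. -/
/-- The hyperbolic semi-metric `γ(g,h) = |g-h|² / (Im g · Im h)` on the upper half plane. -/
noncomputable def gam (g h : ℂ) : ℝ := ‖g - h‖ ^ 2 / (g.im * h.im)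

/-- `cos α_{x,y}` formed from the values `g_x, h_x, g_y, h_y`. -/
noncomputable def cosAlpha (gx hx gy hy : ℂ) : ℝ :=
  if gx ≠ hx ∧ gy ≠ hy then
    ((gx - hx) * (starRingEnd ℂ) (gy - hy)).re /
      (‖gx - hx‖ * ‖gy - hy‖)
  else 0

/-- `Q_{x,y}` formed from the values `g_x, h_x, g_y, h_y`. -/
noncomputable def Qquot (gx hx gy hy : ℂ) : ℝ :=
  if gx ≠ hx ∧ gy ≠ hy then
    Real.sqrt (gx.im * gy.im * hx.im * hy.im * gam gx hx * gam gy hy) /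
      ((1 / 2) * (gx.im * hy.im * gam gy hy + gy.im * hx.im * gam gx hx))
  else 0

/-! The `(x, y)` summand equals `2 Re(d_x d̄_y) · a/(a + b)` with `d = ξ - ζ`,
`a = |d_x|² (Im ξ_y)²` and `b = |d_y|² (Im ξ_x)²`, so the `(x, y)` and `(y, x)` summands add up to
`2 Re(d_x d̄_y) = Re(d_x d̄_y) + Re(d_y d̄_x)`. Symmetrising the double sum therefore turns the
right-hand side into `∑_{x,y} Re(d_x d̄_y) = |∑ d|²`. -/

open ComplexConjugate

theorem Finset.sum_sum_eq_of_add_swap {ι M : Type*} [AddCommMonoid M] [IsAddTorsionFree M]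
    (s : Finset ι) (F G : ι → ι → M)
    (h : ∀ x ∈ s, ∀ y ∈ s, F x y + F y x = G x y + G y x) :
    ∑ x ∈ s, ∑ y ∈ s, F x y = ∑ x ∈ s, ∑ y ∈ s, G x y := by
  have symmetrise : ∀ H : ι → ι → M,
      2 • ∑ x ∈ s, ∑ y ∈ s, H x y = ∑ x ∈ s, ∑ y ∈ s, (H x y + H y x) := fun H => by
    simp only [two_nsmul, sum_add_distrib]
    rw [sum_comm (f := fun x y => H y x)]
  apply nsmul_right_injective two_ne_zero
  simp only [symmetrise]
  exact sum_congr rfl fun x hx => sum_congr rfl fun y hy => h x hx y hy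

theorem Complex.sq_norm_sum_eq_sum_sum_re_mul_conj {ι : Type*} (s : Finset ι) (d : ι → ℂ) :
    ‖∑ x ∈ s, d x‖ ^ 2 = ∑ x ∈ s, ∑ y ∈ s, (d x * conj (d y)).re := by
  rw [← real_inner_self_eq_norm_sq, sum_inner]
  simp only [inner_sum, Complex.inner]
  exact Finset.sum_comm

theorem Complex.re_mul_conj_comm (z w : ℂ) : (w * conj z).re = (z * conj w).re := by
  rw [← Complex.conj_re, map_mul, Complex.conj_conj, mul_comm]

section PairTerm

variable {gx hx gy hy : ℂ}

theorem im_mul_cosAlpha_mul_Qquot_mul_gam (hgx : gx.im ≠ 0) (hhx : hx.im ≠ 0) (hgy : gy.im ≠ 0)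
    (hhy : hy.im ≠ 0) :
    hx.im * (gy.im * cosAlpha gx hx gy hy * Qquot gx hx gy hy) * gam gx hx =
      2 * ((gx - hx) * conj (gy - hy)).re * (‖gx - hx‖ ^ 2 * gy.im ^ 2) /
        (‖gx - hx‖ ^ 2 * gy.im ^ 2 + ‖gy - hy‖ ^ 2 * gx.im ^ 2) := by
  by_cases hdx : gx = hx
  · simp [cosAlpha, hdx]
  by_cases hdy : gy = hy
  · simp [cosAlpha, hdy]
  have hnx : ‖gx - hx‖ ≠ 0 := by simpa [sub_eq_zero] using hdx
  have hny : ‖gy - hy‖ ≠ 0 := by simpa [sub_eq_zero] using hdy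
  have hsqrt : Real.sqrt (gx.im * gy.im * hx.im * hy.im * gam gx hx * gam gy hy) =
      ‖gx - hx‖ * ‖gy - hy‖ := by
    rw [← Real.sqrt_sq (by positivity : 0 ≤ ‖gx - hx‖ * ‖gy - hy‖)]
    congr 1
    unfold gam
    field_simp
  have hden : ‖gx - hx‖ ^ 2 * gy.im ^ 2 + ‖gy - hy‖ ^ 2 * gx.im ^ 2 ≠ 0 := by positivity
  rw [cosAlpha, Qquot, if_pos ⟨hdx, hdy⟩, if_pos ⟨hdx, hdy⟩, hsqrt]
  unfold gam
  field_simp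
  ring

theorem im_mul_cosAlpha_mul_Qquot_mul_gam_add_swap (hgx : gx.im ≠ 0) (hhx : hx.im ≠ 0)
    (hgy : gy.im ≠ 0) (hhy : hy.im ≠ 0) :
    hx.im * (gy.im * cosAlpha gx hx gy hy * Qquot gx hx gy hy) * gam gx hx +
        hy.im * (gx.im * cosAlpha gy hy gx hx * Qquot gy hy gx hx) * gam gy hy =
      ((gx - hx) * conj (gy - hy)).re + ((gy - hy) * conj (gx - hx)).re := by
  rw [im_mul_cosAlpha_mul_Qquot_mul_gam hgx hhx hgy hhy,
    im_mul_cosAlpha_mul_Qquot_mul_gam hgy hhy hgx hhx, Complex.re_mul_conj_comm (gx - hx)]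
  set a := ‖gx - hx‖ ^ 2 * gy.im ^ 2
  set b := ‖gy - hy‖ ^ 2 * gx.im ^ 2
  by_cases hab : a + b = 0
  · -- `a, b ≥ 0` forces `a = 0`, i.e. `gx = hx`
    have ha : a = 0 := by
      have : 0 ≤ a := by positivity
      have : 0 ≤ b := by positivity
      linarith
    have hdx : gx - hx = 0 := by simpa [a, hgy] using ha
    simp [hdx]
  · rw [add_comm b a]
    field_simp
    ring

end PairTerm

theorem sum_difference_expansion_general
    {S : Type*} [Fintype S]
    (ξ ζ : S → ℂ) (hξ : ∀ x, 0 < (ξ x).im) (hζ : ∀ x, 0 < (ζ x).im) :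
    ‖∑ x, ξ x - ∑ x, ζ x‖ ^ 2 =
      ∑ x, (ζ x).im *
        (∑ y, (ξ y).im * cosAlpha (ξ x) (ζ x) (ξ y) (ζ y) * Qquot (ξ x) (ζ x) (ξ y) (ζ y)) *
          gam (ξ x) (ζ x) := by
  rw [← Finset.sum_sub_distrib, Complex.sq_norm_sum_eq_sum_sum_re_mul_conj]
  simp only [Finset.mul_sum, Finset.sum_mul]
  refine Finset.sum_sum_eq_of_add_swap _ _ _ fun x _ y _ => ?_
  exact (im_mul_cosAlpha_mul_Qquot_mul_gam_add_swap (hξ x).ne' (hζ x).ne' (hξ y).ne'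
    (hζ y).ne').symm

theorem sum_difference_expansion
    {S : Type*} [Fintype S] [Nonempty S]
    (ξ ζ : S → ℂ) (hξ : ∀ x, 0 < (ξ x).im) (hζ : ∀ x, 0 < (ζ x).im) :
    ‖∑ x, ξ x - ∑ x, ζ x‖ ^ 2 =
      ∑ x, (ζ x).im *
        (∑ y, (ξ y).im * cosAlpha (ξ x) (ζ x) (ξ y) (ζ y) * Qquot (ξ x) (ζ x) (ξ y) (ζ y)) *
          gam (ξ x) (ζ x) :=
  sum_difference_expansion_general ξ ζ hξ hζ
end

section
/- Let S be a finite nonempty set, z ∈ ℍ, v ∈ ℝ, and g, h : S → ℍ. Then z − v + Σ_{x∈S} g_x ∈ ℍ and z − v + Σ_{x∈S} h_x ∈ ℍ, and γ(−(z − v + Σ_{x∈S} g_x)⁻¹, −(z − v + Σ_{x∈S} h_x)⁻¹) ≤ Σ_{x∈S} (Im h_x / Σ_{u∈S} Im h_u) · (Σ_{y∈S} q_y(g) · Q_{x,y} · cos α_{x,y}) · γ(g_x, h_x). -/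
/-! The map `w ↦ -w⁻¹` preserves `γ`, so the left-hand side is `γ(G, H)` with
`G - H = ∑ (g x - h x)`, `Im G = Im z + ∑ Im g x` and `Im H = Im z + ∑ Im h x`. The right-hand side
is a double sum whose `(x, y)` and `(y, x)` terms add up to `2 Re((g x - h x) conj (g y - h y))`;
symmetrizing, it is exactly `|∑ (g x - h x)|² / (∑ Im g x · ∑ Im h x)`, and `Im z > 0` only
enlarges the denominator. -/

theorem gam_neg_inv_neg_inv {G H : ℂ} (hG : G ≠ 0) (hH : H ≠ 0) :
    gam (-G⁻¹) (-H⁻¹) = gam G H := by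
  have hdiff : -G⁻¹ - -H⁻¹ = (G - H) / (G * H) := by field_simp; ring
  have hnG : ‖G‖ ≠ 0 := norm_ne_zero_iff.mpr hG
  have hnH : ‖H‖ ≠ 0 := norm_ne_zero_iff.mpr hH
  simp only [gam, hdiff, Complex.neg_im, Complex.inv_im, neg_div, neg_neg, norm_div, norm_mul,
    ← Complex.sq_norm]
  field_simp

/- With `X = Im c · |a - b|² / Im a` and `Y = Im a · |c - d|² / Im c`, the two summands are
`X / (X + Y)` and `Y / (X + Y)` times the right-hand side. -/
theorem im_mul_Qquot_cosAlpha_gam_add_swap {a b c d : ℂ}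
    (ha : 0 < a.im) (hb : 0 < b.im) (hc : 0 < c.im) (hd : 0 < d.im) :
    b.im * c.im * (Qquot a b c d * cosAlpha a b c d * gam a b)
      + d.im * a.im * (Qquot c d a b * cosAlpha c d a b * gam c d)
      = 2 * ((a - b) * (starRingEnd ℂ) (c - d)).re := by
  by_cases hab : a = b
  · simp [Qquot, cosAlpha, hab]
  by_cases hcd : c = d
  · simp [Qquot, cosAlpha, hcd]
  have hp : 0 < ‖a - b‖ := norm_pos_iff.mpr (sub_ne_zero.mpr hab)
  have hq : 0 < ‖c - d‖ := norm_pos_iff.mpr (sub_ne_zero.mpr hcd)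
  have hroot : √(a.im * c.im * b.im * d.im * gam a b * gam c d) = ‖a - b‖ * ‖c - d‖ := by
    rw [← Real.sqrt_sq (by positivity : 0 ≤ ‖a - b‖ * ‖c - d‖)]
    unfold gam
    congr 1
    field_simp
  have hroot' : √(c.im * a.im * d.im * b.im * gam c d * gam a b) = ‖a - b‖ * ‖c - d‖ := by
    rw [← hroot]
    ring_nf
  have hre : ((c - d) * (starRingEnd ℂ) (a - b)).re = ((a - b) * (starRingEnd ℂ) (c - d)).re := by
    rw [← Complex.conj_re, map_mul, Complex.conj_conj, mul_comm]
  rw [Qquot, cosAlpha, Qquot, cosAlpha, if_pos ⟨hab, hcd⟩, if_pos ⟨hab, hcd⟩,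
    if_pos ⟨hcd, hab⟩, if_pos ⟨hcd, hab⟩, hroot, hroot', hre]
  unfold gam
  field_simp
  ring

theorem Finset.sum_sum_eq_of_add_swap_s3 {ι K : Type*} [Fintype ι] [Field K] [CharZero K]
    {f k : ι → ι → K} (h : ∀ x y, f x y + f y x = 2 * k x y) :
    ∑ x, ∑ y, f x y = ∑ x, ∑ y, k x y := by
  refine mul_left_cancel₀ (two_ne_zero (α := K)) ?_
  calc 2 * ∑ x, ∑ y, f x y = ∑ x, ∑ y, f x y + ∑ x, ∑ y, f y x := by
        rw [Finset.sum_comm (f := fun x y => f y x), two_mul]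
    _ = 2 * ∑ x, ∑ y, k x y := by
        simp only [← Finset.sum_add_distrib, h, Finset.mul_sum]

theorem Complex.sq_norm_sum {ι : Type*} [Fintype ι] (w : ι → ℂ) :
    ‖∑ x, w x‖ ^ 2 = ∑ x, ∑ y, (w x * (starRingEnd ℂ) (w y)).re := by
  rw [← Complex.normSq_eq_norm_sq, ← Complex.ofReal_re (Complex.normSq _), ← Complex.mul_conj,
    map_sum, Finset.sum_mul_sum, Complex.re_sum]
  simp only [Complex.re_sum]

theorem sum_weighted_Qquot_cosAlpha_gam {S : Type*} [Fintype S] (g h : S → ℂ)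
    (hg : ∀ x, 0 < (g x).im) (hh : ∀ x, 0 < (h x).im) :
    ∑ x, ((h x).im / ∑ u, (h u).im) *
        (∑ y, ((g y).im / ∑ u, (g u).im) * Qquot (g x) (h x) (g y) (h y) *
          cosAlpha (g x) (h x) (g y) (h y)) * gam (g x) (h x)
      = ‖∑ x, (g x - h x)‖ ^ 2 / ((∑ u, (g u).im) * ∑ u, (h u).im) := by
  calc _ = (∑ x, ∑ y, (h x).im * (g y).im *
          (Qquot (g x) (h x) (g y) (h y) * cosAlpha (g x) (h x) (g y) (h y) * gam (g x) (h x)))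
            / ((∑ u, (g u).im) * ∑ u, (h u).im) := by
        rw [Finset.sum_div]
        refine Finset.sum_congr rfl fun x _ => ?_
        rw [Finset.mul_sum, Finset.sum_mul, Finset.sum_div]
        refine Finset.sum_congr rfl fun y _ => ?_
        ring
    _ = (∑ x, ∑ y, ((g x - h x) * (starRingEnd ℂ) (g y - h y)).re)
            / ((∑ u, (g u).im) * ∑ u, (h u).im) := by
        rw [Finset.sum_sum_eq_of_add_swap_s3 fun x y =>
          im_mul_Qquot_cosAlpha_gam_add_swap (hg x) (hh x) (hg y) (hh y)]
    _ = _ := by rw [Complex.sq_norm_sum]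

theorem one_step_expansion_estimate
    {S : Type*} [Fintype S] [Nonempty S]
    (z : ℂ) (hz : 0 < z.im) (v : ℝ)
    (g h : S → ℂ) (hg : ∀ x, 0 < (g x).im) (hh : ∀ x, 0 < (h x).im) :
    0 < (z - (v : ℂ) + ∑ x, g x).im ∧ 0 < (z - (v : ℂ) + ∑ x, h x).im ∧
      gam (-(z - (v : ℂ) + ∑ x, g x)⁻¹) (-(z - (v : ℂ) + ∑ x, h x)⁻¹) ≤
        ∑ x, ((h x).im / ∑ u, (h u).im) *
          (∑ y, ((g y).im / ∑ u, (g u).im) * Qquot (g x) (h x) (g y) (h y) *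
            cosAlpha (g x) (h x) (g y) (h y)) * gam (g x) (h x) := by
  have hA : 0 < ∑ u, (g u).im := Finset.sum_pos (fun u _ => hg u) Finset.univ_nonempty
  have hB : 0 < ∑ u, (h u).im := Finset.sum_pos (fun u _ => hh u) Finset.univ_nonempty
  have hG : (z - (v : ℂ) + ∑ x, g x).im = z.im + ∑ u, (g u).im := by simp [Complex.im_sum]
  have hH : (z - (v : ℂ) + ∑ x, h x).im = z.im + ∑ u, (h u).im := by simp [Complex.im_sum]
  have hGpos : 0 < (z - (v : ℂ) + ∑ x, g x).im := hG ▸ add_pos hz hA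
  have hHpos : 0 < (z - (v : ℂ) + ∑ x, h x).im := hH ▸ add_pos hz hB
  have hdiff : (z - (v : ℂ) + ∑ x, g x) - (z - (v : ℂ) + ∑ x, h x) = ∑ x, (g x - h x) := by
    rw [Finset.sum_sub_distrib]
    ring
  have hG0 : z - (v : ℂ) + ∑ x, g x ≠ 0 := fun h0 => by simp [h0] at hGpos
  have hH0 : z - (v : ℂ) + ∑ x, h x ≠ 0 := fun h0 => by simp [h0] at hHpos
  refine ⟨hGpos, hHpos, ?_⟩
  rw [gam_neg_inv_neg_inv hG0 hH0, sum_weighted_Qquot_cosAlpha_gam g h hg hh, gam, hdiff, hG, hH]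
  gcongr <;> linarith
end

section
/- Let S be a finite nonempty set, ε > 0, c ∈ [0, 1), and g, h : S → ℍ. Suppose there are x̃, ỹ ∈ S such that Im g_ỹ > ε · Im g_u for all u ∈ S and Q_{x̃,ỹ} · cos α_{x̃,ỹ} ≤ c. Then Σ_{y∈S} q_y(g) · Q_{x̃,y} · cos α_{x̃,y} ≤ 1 − (1 − c)·ε/|S|. -/
lemma sqrt_mul_div_half_add_le_one {u v : ℝ} (hu : 0 ≤ u) (hv : 0 ≤ v) :
    Real.sqrt (u * v) / ((1 / 2) * (u + v)) ≤ 1 := by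
  refine div_le_one_of_le₀ ?_ (by positivity)
  rw [Real.sqrt_le_left (by positivity)]
  nlinarith [sq_nonneg (u - v)]

lemma gam_nonneg {g h : ℂ} (hg : 0 ≤ g.im) (hh : 0 ≤ h.im) : 0 ≤ gam g h := by
  unfold gam; positivity

lemma Qquot_nonneg {gx hx gy hy : ℂ} (hgx : 0 ≤ gx.im) (hhx : 0 ≤ hx.im)
    (hgy : 0 ≤ gy.im) (hhy : 0 ≤ hy.im) : 0 ≤ Qquot gx hx gy hy := by
  have := gam_nonneg hgx hhx
  have := gam_nonneg hgy hhy
  unfold Qquot; split_ifs <;> positivity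

lemma Qquot_le_one {gx hx gy hy : ℂ} (hgx : 0 ≤ gx.im) (hhx : 0 ≤ hx.im)
    (hgy : 0 ≤ gy.im) (hhy : 0 ≤ hy.im) : Qquot gx hx gy hy ≤ 1 := by
  unfold Qquot
  split_ifs
  · have hu : 0 ≤ gx.im * hy.im * gam gy hy := by
      have := gam_nonneg hgy hhy; positivity
    have hv : 0 ≤ gy.im * hx.im * gam gx hx := by
      have := gam_nonneg hgx hhx; positivity
    convert sqrt_mul_div_half_add_le_one hu hv using 3
    ring
  · exact zero_le_one

lemma cosAlpha_le_one (gx hx gy hy : ℂ) : cosAlpha gx hx gy hy ≤ 1 := by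
  unfold cosAlpha
  split_ifs
  · refine div_le_one_of_le₀ ?_ (by positivity)
    calc ((gx - hx) * (starRingEnd ℂ) (gy - hy)).re
        ≤ ‖(gx - hx) * (starRingEnd ℂ) (gy - hy)‖ := Complex.re_le_norm _
      _ = ‖gx - hx‖ * ‖gy - hy‖ := by rw [norm_mul, Complex.norm_conj]
  · exact zero_le_one

lemma Qquot_mul_cosAlpha_le_one {gx hx gy hy : ℂ} (hgx : 0 ≤ gx.im) (hhx : 0 ≤ hx.im)
    (hgy : 0 ≤ gy.im) (hhy : 0 ≤ hy.im) : Qquot gx hx gy hy * cosAlpha gx hx gy hy ≤ 1 :=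
  (mul_le_of_le_one_right (Qquot_nonneg hgx hhx hgy hhy) (cosAlpha_le_one gx hx gy hy)).trans
    (Qquot_le_one hgx hhx hgy hhy)

section Averages

variable {ι : Type*} [Fintype ι]

lemma sum_mul_le_one_sub_mul {q t : ι → ℝ} (hq : ∀ i, 0 ≤ q i) (hsum : ∑ i, q i = 1)
    (ht : ∀ i, t i ≤ 1) {i₀ : ι} {c : ℝ} (hi₀ : t i₀ ≤ c) :
    ∑ i, q i * t i ≤ 1 - q i₀ * (1 - c) := by
  have hgap : q i₀ * (1 - t i₀) ≤ ∑ i, q i * (1 - t i) :=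
    Finset.single_le_sum (fun i _ => mul_nonneg (hq i) (sub_nonneg.2 (ht i)))
      (Finset.mem_univ i₀)
  have hexpand : ∑ i, q i * (1 - t i) = 1 - ∑ i, q i * t i := by
    simp only [mul_sub, mul_one, Finset.sum_sub_distrib, hsum]
  nlinarith [hq i₀]

lemma div_card_le_div_sum {a : ι → ℝ} (hpos : 0 < ∑ i, a i) {ε : ℝ} {i₀ : ι}
    (hi₀ : ∀ i, ε * a i ≤ a i₀) : ε / Fintype.card ι ≤ a i₀ / ∑ i, a i := by
  have hcard : (0 : ℝ) < Fintype.card ι := by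
    exact_mod_cast Fintype.card_pos_iff.2 ⟨i₀⟩
  rw [div_le_div_iff₀ hcard hpos, Finset.mul_sum]
  calc ∑ i, ε * a i ≤ ∑ _i : ι, a i₀ := Finset.sum_le_sum fun i _ => hi₀ i
    _ = a i₀ * Fintype.card ι := by simp [mul_comm]

end Averages

theorem visible_contraction_estimate_general
    {S : Type*} [Fintype S]
    (ε : ℝ) (c : ℝ) (hc : c ∈ Set.Ico (0 : ℝ) 1)
    (g h : S → ℂ) (hg : ∀ x, 0 < (g x).im) (hh : ∀ x, 0 < (h x).im)
    (x' y' : S)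
    (hvis : ∀ u : S, ε * (g u).im < (g y').im)
    (hQcos : Qquot (g x') (h x') (g y') (h y') * cosAlpha (g x') (h x') (g y') (h y') ≤ c) :
    ∑ y, ((g y).im / ∑ u, (g u).im) * Qquot (g x') (h x') (g y) (h y) *
        cosAlpha (g x') (h x') (g y) (h y) ≤
      1 - (1 - c) * ε / (Fintype.card S : ℝ) := by
  have hpos : 0 < ∑ u, (g u).im :=
    Finset.sum_pos (fun u _ => hg u) ⟨y', Finset.mem_univ y'⟩
  have hweights : ∑ y, (g y).im / ∑ u, (g u).im = 1 := by
    rw [← Finset.sum_div, div_self hpos.ne']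
  have hterms : ∀ y, Qquot (g x') (h x') (g y) (h y) * cosAlpha (g x') (h x') (g y) (h y) ≤ 1 :=
    fun y => Qquot_mul_cosAlpha_le_one (hg x').le (hh x').le (hg y).le (hh y).le
  have havg := sum_mul_le_one_sub_mul (fun y => div_nonneg (hg y).le hpos.le) hweights hterms hQcos
  have hvisible := div_card_le_div_sum hpos fun u => (hvis u).le
  simp only [mul_assoc] at havg ⊢
  rw [mul_div_assoc]
  nlinarith [hc.2]

theorem visible_contraction_estimate
    {S : Type*} [Fintype S] [Nonempty S]
    (ε : ℝ) (hε : 0 < ε) (c : ℝ) (hc : c ∈ Set.Ico (0 : ℝ) 1)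
    (g h : S → ℂ) (hg : ∀ x, 0 < (g x).im) (hh : ∀ x, 0 < (h x).im)
    (x' y' : S)
    (hvis : ∀ u : S, ε * (g u).im < (g y').im)
    (hQcos : Qquot (g x') (h x') (g y') (h y') * cosAlpha (g x') (h x') (g y') (h y') ≤ c) :
    ∑ y, ((g y).im / ∑ u, (g u).im) * Qquot (g x') (h x') (g y) (h y) *
        cosAlpha (g x') (h x') (g y) (h y) ≤
      1 - (1 - c) * ε / (Fintype.card S : ℝ) :=
  visible_contraction_estimate_general ε c hc g h hg hh x' y' hvis hQcos
end

section
/- Let p ∈ ℝ with p > 1, let Π and S be finite nonempty sets, let w : S → [0,∞) with Σ_{x∈S} w_x = 1, let G : Π × S → [0,∞), let C : Π × S → [−1, 1], let ε' > 0 and c₀ ∈ [0, 1). Suppose there is a pair (π̃, x̃) ∈ Π × S with |C(π̃, x̃)| ≤ c₀ and w_{x̃} · G(π̃, x̃)^p ≥ ε' · Σ_{π∈Π} Σ_{x∈S} w_x · G(π, x)^p. Then Σ_{π∈Π} |Σ_{x∈S} w_x · C(π, x) · G(π, x)|^p ≤ (1 − ε'(1 − c₀^p)) · Σ_{π∈Π}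 Σ_{x∈S} w_x · G(π, x)^p. -/
theorem averaged_contraction_estimate
    {P S : Type*} [Fintype P] [Fintype S] [Nonempty P] [Nonempty S]
    (p : ℝ) (hp : 1 < p)
    (w : S → ℝ) (hw : ∀ x, 0 ≤ w x) (hw1 : ∑ x, w x = 1)
    (G : P × S → ℝ) (hG : ∀ a, 0 ≤ G a)
    (C : P × S → ℝ) (hC : ∀ a, C a ∈ Set.Icc (-1 : ℝ) 1)
    (ε' : ℝ) (hε' : 0 < ε') (c0 : ℝ) (hc0 : c0 ∈ Set.Ico (0 : ℝ) 1)
    (π' : P) (x' : S)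
    (hCsmall : |C (π', x')| ≤ c0)
    (hbig : ε' * ∑ π : P, ∑ x : S, w x * G (π, x) ^ p ≤ w x' * G (π', x') ^ p) :
    ∑ π : P, |∑ x : S, w x * C (π, x) * G (π, x)| ^ p ≤
      (1 - ε' * (1 - c0 ^ p)) * ∑ π : P, ∑ x : S, w x * G (π, x) ^ p := by
  classical
  have hp1 : (1 : ℝ) ≤ p := hp.le
  have habs : ∀ a, |C a| ≤ 1 := fun a => abs_le.2 ⟨(hC a).1, (hC a).2⟩
  -- Step A: pointwise bound
  have key : ∀ π : P, |∑ x : S, w x * C (π, x) * G (π, x)| ^ p ≤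
      ∑ x : S, w x * (|C (π, x)| ^ p * G (π, x) ^ p) := by
    intro π
    have h1 : |∑ x : S, w x * C (π, x) * G (π, x)| ≤
        ∑ x : S, w x * (|C (π, x)| * G (π, x)) := by
      refine (Finset.abs_sum_le_sum_abs _ _).trans (le_of_eq ?_)
      refine Finset.sum_congr rfl fun x _ => ?_
      rw [abs_mul, abs_mul, abs_of_nonneg (hw x), abs_of_nonneg (hG _), mul_assoc]
    have h2 : |∑ x : S, w x * C (π, x) * G (π, x)| ^ p ≤
        (∑ x : S, w x * (|C (π, x)| * G (π, x))) ^ p :=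
      Real.rpow_le_rpow (abs_nonneg _) h1 (by positivity)
    refine h2.trans ?_
    have h3 := Real.rpow_arith_mean_le_arith_mean_rpow Finset.univ w
      (fun x => |C (π, x)| * G (π, x)) (fun i _ => hw i) hw1
      (fun i _ => mul_nonneg (abs_nonneg _) (hG _)) hp1
    refine h3.trans (le_of_eq ?_)
    refine Finset.sum_congr rfl fun x _ => ?_
    rw [Real.mul_rpow (abs_nonneg _) (hG _)]
  -- sum over π
  have step : ∑ π : P, |∑ x : S, w x * C (π, x) * G (π, x)| ^ p ≤
      ∑ π : P, ∑ x : S, w x * (|C (π, x)| ^ p * G (π, x) ^ p) :=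
    Finset.sum_le_sum fun π _ => key π
  refine step.trans ?_
  set T := ∑ π : P, ∑ x : S, w x * G (π, x) ^ p with hT
  -- bound the double sum
  have hterm : ∀ a : P × S, w a.2 * (|C a| ^ p * G a ^ p) ≤ w a.2 * G a ^ p := by
    intro a
    have : |C a| ^ p ≤ 1 := Real.rpow_le_one (abs_nonneg _) (habs a) (by linarith)
    nlinarith [mul_nonneg (hw a.2) (Real.rpow_nonneg (hG a) p),
      mul_nonneg (hw a.2) (Real.rpow_nonneg (hG a) p)]
  have hspecial : w x' * (|C (π', x')| ^ p * G (π', x') ^ p) ≤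
      c0 ^ p * (w x' * G (π', x') ^ p) := by
    have h1 : |C (π', x')| ^ p ≤ c0 ^ p :=
      Real.rpow_le_rpow (abs_nonneg _) hCsmall (by linarith)
    have h2 : (0:ℝ) ≤ w x' * G (π', x') ^ p :=
      mul_nonneg (hw x') (Real.rpow_nonneg (hG _) p)
    nlinarith
  have hsum : ∑ π : P, ∑ x : S, w x * (|C (π, x)| ^ p * G (π, x) ^ p) ≤
      T - (1 - c0 ^ p) * (w x' * G (π', x') ^ p) := by
    have expand : ∀ (f : P × S → ℝ),
        ∑ π : P, ∑ x : S, f (π, x) = ∑ a : P × S, f a := by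
      intro f; rw [← Finset.sum_product']; rfl
    rw [hT, expand (fun a => w a.2 * (|C a| ^ p * G a ^ p)),
      expand (fun a => w a.2 * G a ^ p)]
    have hmem : (π', x') ∈ (Finset.univ : Finset (P × S)) := Finset.mem_univ _
    rw [← Finset.sum_erase_add _ _ hmem, ← Finset.sum_erase_add _ _ hmem]
    have hA : ∑ a ∈ Finset.univ.erase (π', x'), w a.2 * (|C a| ^ p * G a ^ p) ≤
        ∑ a ∈ Finset.univ.erase (π', x'), w a.2 * G a ^ p :=
      Finset.sum_le_sum fun a _ => hterm a
    have := hspecial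
    simp only []
    linarith
  refine hsum.trans ?_
  have hc0p : c0 ^ p ≤ 1 := Real.rpow_le_one hc0.1 hc0.2.le (by linarith)
  nlinarith [hbig]
end

section
/- Let f : ℝ → ℝ be twice continuously differentiable, λ ∈ [0, 1] and r, s ∈ ℝ. Then f(λr + (1 − λ)s) = λ f(r) + (1 − λ) f(s) − E, where E = (r − s)² · ∫₀¹ (λ t · 1_{[0, 1−λ]}(t) + (1 − λ)(1 − t) · 1_{[1−λ, 1]}(t)) · f''((1 − t)r + t s) dt and 1_A denotes the indicator function of the set A. -/
/-!
The error term is the Peano kernel `K_λ` of the functional `g ↦ λ g(0) + (1 - λ) g(1) - g(1 - λ)`,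
which vanishes on affine functions: integrating by parts twice, on `[0, 1 - λ]` and on
`[1 - λ, 1]`, gives `∫₀¹ K_λ g'' = λ g(0) + (1 - λ) g(1) - g(1 - λ)`. Apply this to
`g t = f ((1 - t) r + t s)`, for which `g'' = (s - r)² f''`.
-/

open MeasureTheory Set intervalIntegral

noncomputable def jensenKernel (l t : ℝ) : ℝ :=
  l * t * indicator (Icc 0 (1 - l)) (fun _ => 1) t +
    (1 - l) * (1 - t) * indicator (Icc (1 - l) 1) (fun _ => 1) t

theorem jensenKernel_of_lt {l t : ℝ} (h0 : 0 ≤ t) (h1 : t < 1 - l) :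
    jensenKernel l t = l * t := by
  simp [jensenKernel, indicator_of_mem (show t ∈ Icc 0 (1 - l) from ⟨h0, h1.le⟩),
    indicator_of_notMem (show t ∉ Icc (1 - l) 1 from fun h => h1.not_ge h.1)]

theorem jensenKernel_of_gt {l t : ℝ} (h0 : 1 - l < t) (h1 : t ≤ 1) :
    jensenKernel l t = (1 - l) * (1 - t) := by
  simp [jensenKernel, indicator_of_notMem (show t ∉ Icc 0 (1 - l) from fun h => h0.not_ge h.2),
    indicator_of_mem (show t ∈ Icc (1 - l) 1 from ⟨h0.le, h1⟩)]

theorem integral_sub_mul_of_hasDerivAt_of_hasDerivAt {g g' g'' : ℝ → ℝ} {a b : ℝ} (c : ℝ)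
    (hg : ∀ t ∈ uIcc a b, HasDerivAt g (g' t) t)
    (hg' : ∀ t ∈ uIcc a b, HasDerivAt g' (g'' t) t)
    (hg'' : IntervalIntegrable g'' volume a b) :
    ∫ t in a..b, (t - c) * g'' t = (b - c) * g' b - (a - c) * g' a - (g b - g a) := by
  have hg'_int : IntervalIntegrable g' volume a b :=
    ContinuousOn.intervalIntegrable fun t ht => (hg' t ht).continuousAt.continuousWithinAt
  rw [integral_mul_deriv_eq_deriv_mul (u := fun t => t - c)
      (fun t _ => (hasDerivAt_id' t).sub_const c) hg' intervalIntegrable_const hg'']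
  simp only [one_mul]
  rw [integral_eq_sub_of_hasDerivAt hg hg'_int]

theorem integral_jensenKernel_mul {g g' g'' : ℝ → ℝ} {l : ℝ} (hl : l ∈ Icc (0 : ℝ) 1)
    (hg : ∀ t ∈ Icc (0 : ℝ) 1, HasDerivAt g (g' t) t)
    (hg' : ∀ t ∈ Icc (0 : ℝ) 1, HasDerivAt g' (g'' t) t)
    (hg'' : IntervalIntegrable g'' volume 0 1) :
    ∫ t in (0 : ℝ)..1, jensenKernel l t * g'' t = l * g 0 + (1 - l) * g 1 - g (1 - l) := by
  have hm : 1 - l ∈ Icc (0 : ℝ) 1 := ⟨by linarith [hl.2], by linarith [hl.1]⟩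
  have hsub₁ : uIcc 0 (1 - l) ⊆ Icc 0 1 := uIcc_subset_Icc (left_mem_Icc.2 zero_le_one) hm
  have hsub₂ : uIcc (1 - l) 1 ⊆ Icc 0 1 := uIcc_subset_Icc hm (right_mem_Icc.2 zero_le_one)
  have hg''₁ : IntervalIntegrable g'' volume 0 (1 - l) :=
    hg''.mono_set (by rwa [uIcc_of_le zero_le_one])
  have hg''₂ : IntervalIntegrable g'' volume (1 - l) 1 :=
    hg''.mono_set (by rwa [uIcc_of_le zero_le_one])
  -- Both indicators equal `1` at `1 - l`, so the kernel is matched only on the open pieces.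
  have heq₁ : EqOn (fun t => l * ((t - 0) * g'' t)) (fun t => jensenKernel l t * g'' t)
      (uIoo 0 (1 - l)) := by
    intro t ht
    rw [uIoo_of_le hm.1] at ht
    simp only [jensenKernel_of_lt ht.1.le ht.2]
    ring
  have heq₂ : EqOn (fun t => -(1 - l) * ((t - 1) * g'' t)) (fun t => jensenKernel l t * g'' t)
      (uIoo (1 - l) 1) := by
    intro t ht
    rw [uIoo_of_le hm.2] at ht
    simp only [jensenKernel_of_gt ht.1 ht.2.le]
    ring
  have hint₁ := ((hg''₁.continuousOn_mul (continuous_sub_right 0).continuousOn).const_mul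
    l).congr_uIoo heq₁
  have hint₂ := ((hg''₂.continuousOn_mul (continuous_sub_right 1).continuousOn).const_mul
    (-(1 - l))).congr_uIoo heq₂
  rw [← integral_add_adjacent_intervals hint₁ hint₂, ← integral_congr_uIoo heq₁,
    ← integral_congr_uIoo heq₂, intervalIntegral.integral_const_mul,
    intervalIntegral.integral_const_mul,
    integral_sub_mul_of_hasDerivAt_of_hasDerivAt 0 (fun t ht => hg t (hsub₁ ht))
      (fun t ht => hg' t (hsub₁ ht)) hg''₁,
    integral_sub_mul_of_hasDerivAt_of_hasDerivAt 1 (fun t ht => hg t (hsub₂ ht))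
      (fun t ht => hg' t (hsub₂ ht)) hg''₂]
  ring

theorem HasDerivAt.comp_segment {φ : ℝ → ℝ} {φ' : ℝ} (r s t : ℝ)
    (h : HasDerivAt φ φ' ((1 - t) * r + t * s)) :
    HasDerivAt (fun t => φ ((1 - t) * r + t * s)) (φ' * (s - r)) t := by
  have hγ : HasDerivAt (fun t : ℝ => (1 - t) * r + t * s) (s - r) t :=
    ((((hasDerivAt_id' t).const_sub 1).mul_const r).add
      ((hasDerivAt_id' t).mul_const s)).congr_deriv (by ring)
  exact h.comp t hγ

theorem jensen_error_term
    (f : ℝ → ℝ) (hf : ContDiff ℝ 2 f)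
    (l : ℝ) (hl : l ∈ Set.Icc (0 : ℝ) 1) (r s : ℝ) :
    f (l * r + (1 - l) * s) =
      l * f r + (1 - l) * f s -
        (r - s) ^ 2 *
          ∫ t in (0 : ℝ)..1,
            (l * t * Set.indicator (Set.Icc (0 : ℝ) (1 - l)) (fun _ => (1 : ℝ)) t +
              (1 - l) * (1 - t) * Set.indicator (Set.Icc (1 - l) (1 : ℝ)) (fun _ => (1 : ℝ)) t) *
              deriv (deriv f) ((1 - t) * r + t * s) := by
  have hf' : ContDiff ℝ 1 (deriv f) := hf.deriv'
  have hf'' : Continuous (deriv (deriv f)) := hf'.continuous_deriv le_rfl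
  have key := integral_jensenKernel_mul hl
    (fun t _ => ((hf.differentiable two_ne_zero _).hasDerivAt.comp_segment r s t))
    (fun t _ => ((hf'.differentiable one_ne_zero _).hasDerivAt.comp_segment r s t).mul_const
      (s - r))
    (Continuous.intervalIntegrable (by fun_prop) 0 1)
  have hscale : (r - s) ^ 2 * ∫ t in (0 : ℝ)..1,
      jensenKernel l t * deriv (deriv f) ((1 - t) * r + t * s) =
      ∫ t in (0 : ℝ)..1, jensenKernel l t *
        (deriv (deriv f) ((1 - t) * r + t * s) * (s - r) * (s - r)) := by
    rw [← intervalIntegral.integral_const_mul]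
    congr 1 with t
    ring
  change _ = _ - (r - s) ^ 2 * ∫ t in (0 : ℝ)..1,
    jensenKernel l t * deriv (deriv f) ((1 - t) * r + t * s)
  rw [hscale, key]
  ring_nf
end

section
/- Let p ∈ ℝ with p ≥ 1, λ ∈ [0, 1], and r, s ∈ ℝ with r > s ≥ 0. Then (λr + (1 − λ)s)^p ≤ (1 − δ_p)·(λ r^p + (1 − λ) s^p), where δ_p = (1 − s/r)² · (p(p − 1)λ(1 − λ)/2) if 1 ≤ p < 2, and δ_p = (1 − s/r)² · λ(1 − λ^{p−1}) if p ≥ 2. -/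
/-!
Dividing by `r ^ p` reduces the claim to `r = 1` and `t = s / r ∈ [0, 1]`. As the mean
`l + (1 - l) t ^ p` is at most `1` and `δ ≥ 0`, it suffices that the Jensen gap
`l + (1 - l) t ^ p - (l + (1 - l) t) ^ p` is at least `δ`.

For `p ≤ 2`, `x ^ p` is `p (p - 1)`-strongly convex on `[0, 1]`, its second derivative
`p (p - 1) x ^ (p - 2)` being at least `p (p - 1)` there; strong convexity between `1` and `t`
is the claimed bound. For `p ≥ 2`, `x ↦ ((1 - t) x + t) ^ p - (1 - t) ^ 2 x ^ p` is convex on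
`[0, 1]` because `x ^ (p - 2)` is increasing, and Jensen's inequality for it between `0` and `1`
with weight `l` is the claimed bound.
-/

open Real Set

lemma convexOn_Icc_of_hasDerivAt2_nonneg {a b : ℝ} {f f' f'' : ℝ → ℝ}
    (hf : ContinuousOn f (Icc a b)) (hf' : ∀ x ∈ Ioo a b, HasDerivAt f (f' x) x)
    (hf'' : ∀ x ∈ Ioo a b, HasDerivAt f' (f'' x) x) (hf''₀ : ∀ x ∈ Ioo a b, 0 ≤ f'' x) :
    ConvexOn ℝ (Icc a b) f :=
  convexOn_of_hasDerivWithinAt2_nonneg (convex_Icc a b) hf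
    (by simpa only [interior_Icc] using fun x hx ↦ (hf' x hx).hasDerivWithinAt)
    (by simpa only [interior_Icc] using fun x hx ↦ (hf'' x hx).hasDerivWithinAt)
    (by simpa only [interior_Icc] using hf''₀)

lemma strongConvexOn_rpow_Icc_zero_one {p : ℝ} (hp1 : 1 ≤ p) (hp2 : p ≤ 2) :
    StrongConvexOn (Icc (0 : ℝ) 1) (p * (p - 1)) fun x : ℝ ↦ x ^ p := by
  rw [strongConvexOn_iff_convex]
  simp only [norm_eq_abs, sq_abs]
  refine convexOn_Icc_of_hasDerivAt2_nonneg (f' := fun x ↦ p * x ^ (p - 1) - p * (p - 1) * x)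
    (f'' := fun x ↦ p * ((p - 1) * x ^ (p - 1 - 1)) - p * (p - 1)) ?_ ?_ ?_ ?_
  · exact Continuous.continuousOn (by fun_prop (disch := linarith))
  · intro x hx
    exact ((hasDerivAt_rpow_const (Or.inl hx.1.ne')).sub
      ((hasDerivAt_pow 2 x).const_mul _)).congr_deriv (by ring)
  · intro x hx
    exact (((hasDerivAt_rpow_const (Or.inl hx.1.ne')).const_mul p).sub
      ((hasDerivAt_id x).const_mul _)).congr_deriv (by ring)
  · intro x hx
    have hx_pow : 1 ≤ x ^ (p - 1 - 1) :=
      one_le_rpow_of_pos_of_le_one_of_nonpos hx.1 hx.2.le (by linarith)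
    have : 0 ≤ p * (p - 1) * (x ^ (p - 1 - 1) - 1) :=
      mul_nonneg (by nlinarith) (sub_nonneg.2 hx_pow)
    linarith

lemma convexOn_rpow_affine_sub_sq_mul_rpow {p t : ℝ} (hp : 2 ≤ p) (ht : t ∈ Icc (0 : ℝ) 1) :
    ConvexOn ℝ (Icc (0 : ℝ) 1) fun x : ℝ ↦ ((1 - t) * x + t) ^ p - (1 - t) ^ 2 * x ^ p := by
  obtain ⟨ht0, ht1⟩ := ht
  have hline (x : ℝ) : HasDerivAt (fun x ↦ (1 - t) * x + t) (1 - t) x := by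
    simpa using ((hasDerivAt_id x).const_mul (1 - t)).add_const t
  refine convexOn_Icc_of_hasDerivAt2_nonneg
    (f' := fun x ↦ (1 - t) * p * ((1 - t) * x + t) ^ (p - 1) - (1 - t) ^ 2 * (p * x ^ (p - 1)))
    (f'' := fun x ↦ (1 - t) * p * ((1 - t) * (p - 1) * ((1 - t) * x + t) ^ (p - 1 - 1))
      - (1 - t) ^ 2 * (p * ((p - 1) * x ^ (p - 1 - 1)))) ?_ ?_ ?_ ?_
  · have := continuous_rpow_const (q := p) (by linarith)
    exact Continuous.continuousOn (by fun_prop)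
  · intro x hx
    exact ((hline x).rpow_const (Or.inr (by linarith))).sub
      ((hasDerivAt_rpow_const (Or.inl hx.1.ne')).const_mul _)
  · intro x hx
    have hpos : 0 < (1 - t) * x + t := by nlinarith [hx.1, hx.2]
    exact (((hline x).rpow_const (Or.inl hpos.ne')).const_mul _).sub
      (((hasDerivAt_rpow_const (Or.inl hx.1.ne')).const_mul p).const_mul _)
  · intro x hx
    have hmono : x ^ (p - 1 - 1) ≤ ((1 - t) * x + t) ^ (p - 1 - 1) :=
      rpow_le_rpow hx.1.le (by nlinarith [hx.2]) (by linarith)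
    have : 0 ≤ p * (p - 1) * (1 - t) ^ 2 *
        (((1 - t) * x + t) ^ (p - 1 - 1) - x ^ (p - 1 - 1)) :=
      mul_nonneg (mul_nonneg (by nlinarith) (sq_nonneg _)) (by linarith)
    linarith

lemma rpow_convexComb_one_le_of_le_two {p l t : ℝ} (hp1 : 1 ≤ p) (hp2 : p ≤ 2)
    (hl : l ∈ Icc (0 : ℝ) 1) (ht : t ∈ Icc (0 : ℝ) 1) :
    (l + (1 - l) * t) ^ p ≤
      l + (1 - l) * t ^ p - (1 - t) ^ 2 * (p * (p - 1) * l * (1 - l) / 2) := by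
  have h := (strongConvexOn_rpow_Icc_zero_one hp1 hp2).2 (right_mem_Icc.2 zero_le_one) ht hl.1
    (sub_nonneg.2 hl.2) (add_sub_cancel l 1)
  simp only [smul_eq_mul, mul_one, one_rpow, norm_eq_abs, sq_abs] at h
  linarith

lemma rpow_convexComb_one_le_of_two_le {p l t : ℝ} (hp : 2 ≤ p)
    (hl : l ∈ Icc (0 : ℝ) 1) (ht : t ∈ Icc (0 : ℝ) 1) :
    (l + (1 - l) * t) ^ p ≤ l + (1 - l) * t ^ p - (1 - t) ^ 2 * (l * (1 - l ^ (p - 1))) := by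
  have h := (convexOn_rpow_affine_sub_sq_mul_rpow hp ht).2 (left_mem_Icc.2 zero_le_one)
    (right_mem_Icc.2 zero_le_one) (sub_nonneg.2 hl.2) hl.1 (sub_add_cancel 1 l)
  have hlp : l ^ p = l * l ^ (p - 1) := by
    rw [← rpow_one_add' hl.1 (by linarith), add_sub_cancel]
  have hu : (1 - t) * l + t = l + (1 - l) * t := by ring
  simp only [smul_eq_mul, mul_zero, mul_one, zero_add, sub_add_cancel, one_rpow,
    zero_rpow (by linarith : p ≠ 0), hlp, hu] at h
  linarith

lemma rpow_convexComb_one_le_one_sub_mul {p l t : ℝ} (hp : 1 ≤ p)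
    (hl : l ∈ Icc (0 : ℝ) 1) (ht : t ∈ Icc (0 : ℝ) 1) :
    (l + (1 - l) * t) ^ p ≤ (1 - (1 - t) ^ 2 *
        (if p < 2 then p * (p - 1) * l * (1 - l) / 2 else l * (1 - l ^ (p - 1)))) *
      (l + (1 - l) * t ^ p) := by
  set c := if p < 2 then p * (p - 1) * l * (1 - l) / 2 else l * (1 - l ^ (p - 1)) with hc_def
  have hgap : (l + (1 - l) * t) ^ p ≤ l + (1 - l) * t ^ p - (1 - t) ^ 2 * c := by
    rw [hc_def]; split_ifs with hp2
    · exact rpow_convexComb_one_le_of_le_two hp hp2.le hl ht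
    · exact rpow_convexComb_one_le_of_two_le (not_lt.1 hp2) hl ht
  have hc : 0 ≤ c := by
    rw [hc_def]; split_ifs
    · exact div_nonneg (mul_nonneg (mul_nonneg (mul_nonneg (by linarith) (by linarith)) hl.1)
        (sub_nonneg.2 hl.2)) zero_le_two
    · exact mul_nonneg hl.1 (sub_nonneg.2 (rpow_le_one hl.1 hl.2 (by linarith)))
  have hmean : l + (1 - l) * t ^ p ≤ 1 := by
    nlinarith [hl.2, rpow_le_one ht.1 ht.2 (by linarith : 0 ≤ p)]
  nlinarith [mul_nonneg (mul_nonneg (sq_nonneg (1 - t)) hc) (sub_nonneg.2 hmean)]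

theorem refined_jensen_monomial
    (p : ℝ) (hp : 1 ≤ p) (l : ℝ) (hl : l ∈ Set.Icc (0 : ℝ) 1)
    (r s : ℝ) (hs : 0 ≤ s) (hrs : s < r)
    (δ : ℝ)
    (hδ : δ = (1 - s / r) ^ 2 *
        (if p < 2 then p * (p - 1) * l * (1 - l) / 2 else l * (1 - l ^ (p - 1)))) :
    (l * r + (1 - l) * s) ^ p ≤ (1 - δ) * (l * r ^ p + (1 - l) * s ^ p) := by
  have hr : 0 < r := hs.trans_lt hrs
  set t := s / r
  have ht : t ∈ Icc (0 : ℝ) 1 := ⟨div_nonneg hs hr.le, (div_le_one hr).2 hrs.le⟩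
  have hs_eq : s = t * r := (div_mul_cancel₀ s hr.ne').symm
  calc (l * r + (1 - l) * s) ^ p = (l + (1 - l) * t) ^ p * r ^ p := by
        rw [← mul_rpow (add_nonneg hl.1 (mul_nonneg (sub_nonneg.2 hl.2) ht.1)) hr.le, hs_eq]
        ring_nf
    _ ≤ (1 - δ) * (l + (1 - l) * t ^ p) * r ^ p := by
        rw [hδ]; gcongr; exact rpow_convexComb_one_le_one_sub_mul hp hl ht
    _ = (1 - δ) * (l * r ^ p + (1 - l) * s ^ p) := by
        rw [hs_eq, mul_rpow ht.1 hr.le]; ring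
end

section
/- Let S be a finite nonempty set, g, h : S → ℍ, and ε, ε', ε₀ > 0 with ε' < ε₀·ε. Let x, y ∈ S satisfy g_x ≠ h_x, g_y ≠ h_y, Im g_y ≤ ε'·Im g_x, γ(g_y, h_y) ≥ ε·γ(g_x, h_x), and Im h_y ≥ ε₀·Im h_x. Then Q_{x,y} ≤ 2√(ε₀ ε ε')/(ε₀ ε + ε') < 1. -/
/-! With `u = Im g_x · Im h_y · γ_y` and `v = Im g_y · Im h_x · γ_x`, the quotient `Q_{x,y}` is the
ratio `2√(uv)/(u+v)` of the geometric and arithmetic means of `u` and `v`. The three hypotheses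
multiply to `ε₀ε · v ≤ ε' · u`, i.e. `v/u ≤ ε'/(ε₀ε) < 1`, and `2√t/(1+t)` increases on `[0, 1]`;
the bound is `< 1` by the strict AM-GM inequality. -/

theorem gam_pos {g h : ℂ} (hg : 0 < g.im) (hh : 0 < h.im) (hne : g ≠ h) : 0 < gam g h :=
  div_pos (pow_pos (norm_pos_iff.mpr (sub_ne_zero.mpr hne)) 2) (mul_pos hg hh)

theorem Qquot_of_ne {gx hx gy hy : ℂ} (hnex : gx ≠ hx) (hney : gy ≠ hy) :
    Qquot gx hx gy hy =
      2 * √((gx.im * hy.im * gam gy hy) * (gy.im * hx.im * gam gx hx)) /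
        (gx.im * hy.im * gam gy hy + gy.im * hx.im * gam gx hx) := by
  rw [Qquot, if_pos ⟨hnex, hney⟩, one_div_mul_eq_div, div_div_eq_mul_div, mul_comm]
  ring_nf

theorem mul_mul_add_sq_le_of_mul_le {u v p q : ℝ} (hu : 0 ≤ u) (hv : 0 ≤ v) (hqp : q ≤ p)
    (h : p * v ≤ q * u) : u * v * (p + q) ^ 2 ≤ p * q * (u + v) ^ 2 := by
  have hpq : 0 ≤ p * u - q * v := by
    nlinarith [mul_nonneg (sub_nonneg.mpr hqp) hu, mul_nonneg (sub_nonneg.mpr hqp) hv]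
  have factor : p * q * (u + v) ^ 2 - u * v * (p + q) ^ 2 = (p * u - q * v) * (q * u - p * v) := by
    ring
  linarith [mul_nonneg hpq (sub_nonneg.mpr h)]

theorem two_sqrt_mul_div_add_le_of_mul_le {u v p q : ℝ} (hu : 0 < u) (hv : 0 ≤ v) (hp : 0 < p)
    (hqp : q ≤ p) (h : p * v ≤ q * u) :
    2 * √(u * v) / (u + v) ≤ 2 * √(p * q) / (p + q) := by
  have hq : 0 ≤ q := nonneg_of_mul_nonneg_left ((mul_nonneg hp.le hv).trans h) hu
  rw [div_le_div_iff₀ (by positivity) (by positivity)]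
  have := Real.sqrt_le_sqrt (mul_mul_add_sq_le_of_mul_le hu.le hv hqp h)
  rw [Real.sqrt_mul (by positivity) ((p + q) ^ 2), Real.sqrt_mul (by positivity) ((u + v) ^ 2),
    Real.sqrt_sq (by positivity), Real.sqrt_sq (by positivity)] at this
  linarith

theorem two_sqrt_mul_div_add_lt_one {p q : ℝ} (hq : 0 ≤ q) (hqp : q < p) :
    2 * √(p * q) / (p + q) < 1 := by
  rw [div_lt_one (by linarith), Real.sqrt_mul (by linarith)]
  have : √q < √p := Real.sqrt_lt_sqrt hq hqp
  nlinarith [Real.sq_sqrt hq, Real.sq_sqrt (hq.trans hqp.le), Real.sqrt_nonneg q]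

theorem geometric_arithmetic_mean_estimate_general
    {S : Type*}
    (g h : S → ℂ) (hg : ∀ u, 0 < (g u).im) (hh : ∀ u, 0 < (h u).im)
    (ε ε' ε₀ : ℝ) (hε' : 0 < ε') (hε₀ : 0 < ε₀)
    (hlt : ε' < ε₀ * ε)
    (x y : S)
    (hx : g x ≠ h x) (hy : g y ≠ h y)
    (hIm : (g y).im ≤ ε' * (g x).im)
    (hgam : ε * gam (g x) (h x) ≤ gam (g y) (h y))
    (hImh : ε₀ * (h x).im ≤ (h y).im) :
    Qquot (g x) (h x) (g y) (h y) ≤ 2 * Real.sqrt (ε₀ * ε * ε') / (ε₀ * ε + ε') ∧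
      2 * Real.sqrt (ε₀ * ε * ε') / (ε₀ * ε + ε') < 1 := by
  have hgx := hg x
  have hgy := hg y
  have hhx := hh x
  have hhy := hh y
  have hγx := gam_pos hgx hhx hx
  have hγy := gam_pos hgy hhy hy
  refine ⟨?_, two_sqrt_mul_div_add_lt_one hε'.le hlt⟩
  rw [Qquot_of_ne hx hy]
  refine two_sqrt_mul_div_add_le_of_mul_le (by positivity) (by positivity) (hε'.trans hlt) hlt.le ?_
  calc ε₀ * ε * ((g y).im * (h x).im * gam (g x) (h x))
      = ε * gam (g x) (h x) * (ε₀ * (h x).im) * (g y).im := by ring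
    _ ≤ gam (g y) (h y) * (h y).im * (ε' * (g x).im) := by gcongr
    _ = ε' * ((g x).im * (h y).im * gam (g y) (h y)) := by ring

theorem geometric_arithmetic_mean_estimate
    {S : Type*} [Fintype S] [Nonempty S]
    (g h : S → ℂ) (hg : ∀ u, 0 < (g u).im) (hh : ∀ u, 0 < (h u).im)
    (ε ε' ε₀ : ℝ) (hε : 0 < ε) (hε' : 0 < ε') (hε₀ : 0 < ε₀)
    (hlt : ε' < ε₀ * ε)
    (x y : S)
    (hx : g x ≠ h x) (hy : g y ≠ h y)
    (hIm : (g y).im ≤ ε' * (g x).im)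
    (hgam : ε * gam (g x) (h x) ≤ gam (g y) (h y))
    (hImh : ε₀ * (h x).im ≤ (h y).im) :
    Qquot (g x) (h x) (g y) (h y) ≤ 2 * Real.sqrt (ε₀ * ε * ε') / (ε₀ * ε + ε') ∧
      2 * Real.sqrt (ε₀ * ε * ε') / (ε₀ * ε + ε') < 1 :=
  geometric_arithmetic_mean_estimate_general g h hg hh ε ε' ε₀ hε' hε₀ hlt x y hx hy hIm hgam hImh
end

section
/- Let ξ, ζ ∈ ℂ with |ζ| < 1. If ξ ≠ 0 and |arg ξ| ≤ π/2, then 1 + ξ + ζ ≠ 0 and |arg(1 + ξ + ζ)| ≤ |arg ξ| + |ζ|/(1 − |ζ|). If ξ = 0, then 1 + ζ ≠ 0 and |arg(1 + ζ)| ≤ |ζ|/(1 − |ζ|). -/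
/-!
Write `1 + ξ + ζ = a * b` with `a = 1 + ξ` and `b = 1 + ζ / a`. Both factors lie in the open right
half-plane, so `arg (a * b) = arg a + arg b` without wrap-around. On the closed right half-plane
`|arg z| = arcsin (|Im z| / ‖z‖)`, and `‖1 + ξ‖ ≥ ‖ξ‖` there, so `|arg a| ≤ |arg ξ|`; since `‖a‖ ≥ 1`,
`‖ζ / a‖ ≤ ‖ζ‖`.
Finally `|arg (1 + z)| ≤ |tan (arg (1 + z))| = |Im z| / Re (1 + z) ≤ ‖z‖ / (1 - ‖z‖)`.
-/

open Complex Real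

lemma Real.abs_le_abs_tan {x : ℝ} (hx : |x| < π / 2) : |x| ≤ |tan x| := by
  have key : |x| ≤ tan |x| := le_tan (abs_nonneg x) hx
  rcases abs_cases x with ⟨h, -⟩ | ⟨h, -⟩ <;> rw [h] at key ⊢
  · exact key.trans (le_abs_self _)
  · rw [tan_neg] at key
    exact key.trans (neg_le_abs _)

namespace Complex

lemma abs_arg_le_abs_im_div_re {w : ℂ} (hw : 0 < w.re) : |arg w| ≤ |w.im| / w.re := by
  have hlt : |arg w| < π / 2 := abs_arg_lt_pi_div_two_iff.mpr (Or.inl hw)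
  simpa only [tan_arg, abs_div, abs_of_pos hw] using Real.abs_le_abs_tan hlt

lemma abs_arg_of_re_nonneg {z : ℂ} (hz : 0 ≤ z.re) : |arg z| = arcsin (|z.im| / ‖z‖) := by
  rw [arg_of_re_nonneg hz]
  rcases le_total 0 z.im with him | him
  · rw [abs_of_nonneg him, abs_of_nonneg (arcsin_nonneg.mpr (by positivity))]
  · rw [abs_of_nonpos him, neg_div, arcsin_neg,
      abs_of_nonpos (arcsin_nonpos.mpr (div_nonpos_of_nonpos_of_nonneg him (norm_nonneg z)))]

lemma norm_le_norm_one_add {z : ℂ} (hz : 0 ≤ z.re) : ‖z‖ ≤ ‖1 + z‖ := by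
  rw [← sq_le_sq₀ (norm_nonneg _) (norm_nonneg _), Complex.sq_norm, Complex.sq_norm, normSq_apply, normSq_apply]
  simp only [add_re, one_re, add_im, one_im, zero_add]
  nlinarith

lemma re_one_add_pos {z : ℂ} (hz : ‖z‖ < 1) : 0 < (1 + z).re := by
  have := neg_le_of_abs_le (abs_re_le_norm z)
  simp only [add_re, one_re]
  linarith

lemma abs_arg_one_add_le_abs_arg {z : ℂ} (hz : 0 ≤ z.re) : |arg (1 + z)| ≤ |arg z| := by
  rcases eq_or_ne z 0 with rfl | hz0
  · simp
  have h1z : 0 ≤ (1 + z).re := by simp only [add_re, one_re]; linarith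
  rw [abs_arg_of_re_nonneg hz, abs_arg_of_re_nonneg h1z, add_im, one_im, zero_add]
  exact arcsin_le_arcsin <|
    div_le_div_of_nonneg_left (abs_nonneg _) (norm_pos_iff.mpr hz0) (norm_le_norm_one_add hz)

lemma abs_arg_one_add_le {z : ℂ} (hz : ‖z‖ < 1) : |arg (1 + z)| ≤ ‖z‖ / (1 - ‖z‖) := by
  have hre : 1 - ‖z‖ ≤ (1 + z).re := by
    have := neg_le_of_abs_le (abs_re_le_norm z)
    simp only [add_re, one_re]
    linarith
  calc |arg (1 + z)| ≤ |(1 + z).im| / (1 + z).re := abs_arg_le_abs_im_div_re (re_one_add_pos hz)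
    _ ≤ ‖z‖ / (1 - ‖z‖) := by
      rw [add_im, one_im, zero_add]
      exact div_le_div₀ (norm_nonneg z) (abs_im_le_norm z) (by linarith) hre

lemma arg_mul_of_re_pos {x y : ℂ} (hx : 0 < x.re) (hy : 0 < y.re) :
    arg (x * y) = arg x + arg y := by
  have hx' := abs_lt.mp (abs_arg_lt_pi_div_two_iff.mpr (Or.inl hx))
  have hy' := abs_lt.mp (abs_arg_lt_pi_div_two_iff.mpr (Or.inl hy))
  refine arg_mul (ne_of_apply_ne re hx.ne') (ne_of_apply_ne re hy.ne') ⟨?_, ?_⟩ <;> linarith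

lemma add_ne_zero_and_abs_arg_add_le {a ζ : ℂ} (ha : 0 < a.re) (ha1 : 1 ≤ ‖a‖) (hζ : ‖ζ‖ < 1) :
    a + ζ ≠ 0 ∧ |arg (a + ζ)| ≤ |arg a| + ‖ζ‖ / (1 - ‖ζ‖) := by
  have ha0 : a ≠ 0 := ne_of_apply_ne re ha.ne'
  have hζa : ‖ζ / a‖ ≤ ‖ζ‖ := by
    rw [norm_div]
    exact div_le_self (norm_nonneg ζ) ha1
  have hb : 0 < (1 + ζ / a).re := re_one_add_pos (hζa.trans_lt hζ)
  have hfactor : a + ζ = a * (1 + ζ / a) := by field_simp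
  refine ⟨hfactor ▸ mul_ne_zero ha0 (ne_of_apply_ne re hb.ne'), ?_⟩
  rw [hfactor, arg_mul_of_re_pos ha hb]
  calc |arg a + arg (1 + ζ / a)| ≤ |arg a| + |arg (1 + ζ / a)| := abs_add_le _ _
    _ ≤ |arg a| + ‖ζ / a‖ / (1 - ‖ζ / a‖) := by
      gcongr
      exact abs_arg_one_add_le (hζa.trans_lt hζ)
    _ ≤ |arg a| + ‖ζ‖ / (1 - ‖ζ‖) := by gcongr

end Complex

theorem arg_perturbation_estimate
    (ξ ζ : ℂ) (hζ : ‖ζ‖ < 1) :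
    (ξ ≠ 0 → |ξ.arg| ≤ Real.pi / 2 →
      1 + ξ + ζ ≠ 0 ∧
        |(1 + ξ + ζ).arg| ≤ |ξ.arg| + ‖ζ‖ / (1 - ‖ζ‖)) ∧
    (ξ = 0 →
      1 + ζ ≠ 0 ∧ |(1 + ζ).arg| ≤ ‖ζ‖ / (1 - ‖ζ‖)) := by
  refine ⟨fun _ harg => ?_, fun _ => ?_⟩
  · have hre : 0 ≤ ξ.re := abs_arg_le_pi_div_two_iff.mp harg
    have ha : 1 ≤ (1 + ξ).re := by simp only [add_re, one_re]; linarith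
    obtain ⟨hne, hle⟩ := add_ne_zero_and_abs_arg_add_le (by linarith) (ha.trans (re_le_norm _)) hζ
    exact ⟨hne, hle.trans (add_le_add_left (abs_arg_one_add_le_abs_arg hre) _)⟩
  · exact ⟨ne_of_apply_ne re (re_one_add_pos hζ).ne', abs_arg_one_add_le hζ⟩
end

section
/- Let S be a finite nonempty set, δ ∈ [0, π/2], and ξ : S → ℂ with ξ_x ≠ 0 for all x ∈ S, such that |arg(ξ_x / ξ_y)| ≤ δ for all x, y ∈ S. Then for every x ∈ S: |Σ_{y∈S} ξ_y| ≥ |ξ_x|; in particular Σ_{y∈S} ξ_y ≠ 0, and moreover |arg((Σ_{y∈S} ξ_y) / ξ_x)| ≤ δ. -/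
/-!
Divide everything by `ξ x`. For `w ≠ 0` and `0 ≤ δ ≤ π`, the condition `|arg w| ≤ δ` says
`cos δ * ‖w‖ ≤ re w`, and when `cos δ ≥ 0` this condition is stable under sums by the triangle
inequality. So the normalized sum stays in the sector, and its real part is at least that of the
summand `ξ x / ξ x = 1`, because all real parts are nonnegative.
-/

open Real

theorem Complex.abs_arg_le_iff_cos_mul_norm_le_re {w : ℂ} (hw : w ≠ 0) {δ : ℝ}
    (hδ : δ ∈ Set.Icc 0 π) :
    |w.arg| ≤ δ ↔ Real.cos δ * ‖w‖ ≤ w.re := by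
  have hnorm : 0 < ‖w‖ := norm_pos_iff.mpr hw
  have harg : |w.arg| ∈ Set.Icc 0 π :=
    ⟨abs_nonneg _, abs_le.mpr ⟨w.neg_pi_lt_arg.le, w.arg_le_pi⟩⟩
  have hre : w.re = Real.cos |w.arg| * ‖w‖ := by
    rw [Real.cos_abs, Complex.cos_arg hw, div_mul_cancel₀ _ hnorm.ne']
  rw [hre, mul_le_mul_iff_left₀ hnorm, Real.strictAntiOn_cos.le_iff_ge hδ harg]

theorem Complex.mul_norm_sum_le_re_sum {ι : Type*} (s : Finset ι) (f : ι → ℂ) {c : ℝ}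
    (hc : 0 ≤ c) (hf : ∀ i ∈ s, c * ‖f i‖ ≤ (f i).re) :
    c * ‖∑ i ∈ s, f i‖ ≤ (∑ i ∈ s, f i).re :=
  calc c * ‖∑ i ∈ s, f i‖ ≤ c * ∑ i ∈ s, ‖f i‖ := by gcongr; exact norm_sum_le s f
    _ ≤ ∑ i ∈ s, (f i).re := by rw [Finset.mul_sum]; exact Finset.sum_le_sum hf
    _ = (∑ i ∈ s, f i).re := (Complex.re_sum s f).symm

theorem sum_of_aligned_complex_numbers_general
    {S : Type*} [Fintype S]
    (δ : ℝ) (hδ : δ ∈ Set.Icc (0 : ℝ) (Real.pi / 2))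
    (ξ : S → ℂ) (hξ : ∀ x, ξ x ≠ 0)
    (harg : ∀ x y : S, |(ξ x / ξ y).arg| ≤ δ) :
    ∀ x : S,
      ‖ξ x‖ ≤ ‖∑ y, ξ y‖ ∧
      (∑ y, ξ y) ≠ 0 ∧
      |((∑ y, ξ y) / ξ x).arg| ≤ δ := by
  intro x
  have hδπ : δ ∈ Set.Icc 0 π := ⟨hδ.1, hδ.2.trans (by linarith [pi_pos])⟩
  have hcos : 0 ≤ cos δ := cos_nonneg_of_mem_Icc ⟨by linarith [pi_pos, hδ.1], hδ.2⟩
  set w : S → ℂ := fun y => ξ y / ξ x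
  have hw : ∀ y, cos δ * ‖w y‖ ≤ (w y).re := fun y =>
    (Complex.abs_arg_le_iff_cos_mul_norm_le_re (div_ne_zero (hξ y) (hξ x)) hδπ).mp (harg y x)
  have hsum : (∑ y, ξ y) / ξ x = ∑ y, w y := Finset.sum_div _ _ _
  have hone : 1 ≤ ‖∑ y, w y‖ :=
    calc (1 : ℝ) = (w x).re := by simp [w, div_self (hξ x)]
      _ ≤ ∑ y, (w y).re := Finset.single_le_sum
          (fun y _ => (mul_nonneg hcos (norm_nonneg _)).trans (hw y)) (Finset.mem_univ x)
      _ = (∑ y, w y).re := (Complex.re_sum _ _).symm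
      _ ≤ ‖∑ y, w y‖ := Complex.re_le_norm _
  have hnorm : ‖ξ x‖ ≤ ‖∑ y, ξ y‖ := by
    rw [← div_mul_cancel₀ (∑ y, ξ y) (hξ x), norm_mul, hsum]
    exact le_mul_of_one_le_left (norm_nonneg _) hone
  refine ⟨hnorm, norm_pos_iff.mp ((norm_pos_iff.mpr (hξ x)).trans_le hnorm), ?_⟩
  have hsum_ne : ∑ y, w y ≠ 0 := norm_pos_iff.mp (one_pos.trans_le hone)
  rw [hsum, Complex.abs_arg_le_iff_cos_mul_norm_le_re hsum_ne hδπ]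
  exact Complex.mul_norm_sum_le_re_sum _ _ hcos fun y _ => hw y

theorem sum_of_aligned_complex_numbers
    {S : Type*} [Fintype S] [Nonempty S]
    (δ : ℝ) (hδ : δ ∈ Set.Icc (0 : ℝ) (Real.pi / 2))
    (ξ : S → ℂ) (hξ : ∀ x, ξ x ≠ 0)
    (harg : ∀ x y : S, |(ξ x / ξ y).arg| ≤ δ) :
    ∀ x : S,
      ‖ξ x‖ ≤ ‖∑ y, ξ y‖ ∧
      (∑ y, ξ y) ≠ 0 ∧
      |((∑ y, ξ y) / ξ x).arg| ≤ δ :=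
  sum_of_aligned_complex_numbers_general δ hδ ξ hξ harg
end

section
/- Let p ∈ ℝ with p ≥ 1 and r, s ∈ ℝ with r, s ≥ 0. Then (r + s)^p ≤ (1 + s)^{p−1} · r^p + (1 + s)^p · s. -/
/-!
`(r + s) / (1 + s)` is the mean of the points `r` and `1` with weights `1/(1+s)` and `s/(1+s)`,
so Jensen's inequality for the convex function `t ↦ t ^ p` gives
`(r + s) ^ p ≤ (1 + s) ^ (p - 1) * (r ^ p + s)`; finally `(1 + s) ^ (p - 1) ≤ (1 + s) ^ p`.
-/

namespace Real

theorem rpow_mul_add_mul_le {p : ℝ} (hp : 1 ≤ p) {u v x y : ℝ} (hu : 0 ≤ u) (hv : 0 ≤ v)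
    (hx : 0 ≤ x) (hy : 0 ≤ y) :
    (u * x + v * y) ^ p ≤ (u + v) ^ (p - 1) * (u * x ^ p + v * y ^ p) := by
  obtain hw₀ | hw := (add_nonneg hu hv).eq_or_lt
  · obtain ⟨rfl, rfl⟩ := (add_eq_zero_iff_of_nonneg hu hv).1 hw₀.symm
    simp [zero_rpow (by linarith : p ≠ 0)]
  have jensen := (convexOn_rpow hp).2 (Set.mem_Ici.2 hx) (Set.mem_Ici.2 hy)
    (div_nonneg hu hw.le) (div_nonneg hv hw.le) (by field_simp)
  simp only [smul_eq_mul] at jensen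
  calc (u * x + v * y) ^ p = (u + v) ^ p * (u / (u + v) * x + v / (u + v) * y) ^ p := by
        rw [← mul_rpow hw.le (by positivity)]
        congr 1
        field_simp
    _ ≤ (u + v) ^ p * (u / (u + v) * x ^ p + v / (u + v) * y ^ p) := by gcongr
    _ = (u + v) ^ (p - 1) * (u * x ^ p + v * y ^ p) := by
        rw [rpow_sub_one hw.ne']
        field_simp

end Real

theorem rpow_add_estimate
    (p : ℝ) (hp : 1 ≤ p) (r s : ℝ) (hr : 0 ≤ r) (hs : 0 ≤ s) :
    (r + s) ^ p ≤ (1 + s) ^ (p - 1) * r ^ p + (1 + s) ^ p * s := by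
  have jensen := Real.rpow_mul_add_mul_le hp zero_le_one hs hr zero_le_one
  simp only [one_mul, mul_one, Real.one_rpow] at jensen
  have hpow : (1 + s) ^ (p - 1) ≤ (1 + s) ^ p :=
    Real.rpow_le_rpow_of_exponent_le (by linarith) (by linarith)
  calc (r + s) ^ p ≤ (1 + s) ^ (p - 1) * (r ^ p + s) := jensen
    _ ≤ (1 + s) ^ (p - 1) * r ^ p + (1 + s) ^ p * s := by
        rw [mul_add]
        gcongr
end
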